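/- arXiv:0810.2061 — 2 statements merged into one kernel-verified Lean document; each statement's English description precedes it below -/
import Mathlib

section
/- If !F1 | F'1 ~ !F2 | F'2, where F1, F'1, F2, F'2 are finite processes, then !F1 ~ !F2. -/
namespace CCS

/-- Process terms over a set of actions `A`. -/
inductive Proc (A : Type) where
  | nil : Proc A
  | pre : A → Proc A → Proc A
  | par : Proc A → Proc A → Proc A
  | repl : A → Proc A → Proc A

namespace Proc

/-- Finite processes: no occurrence of replication. -/
def IsFin {A : Type} : Proc A → Prop
  | nil => True
  | pre _ p => IsFin p
  | par p q => IsFin p ∧ IsFin q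
  | repl _ _ => False

/-- Processes of the calculus: replication is applied only to prefixed
finite processes, at top level. -/
def Wf {A : Type} : Proc A → Prop
  | nil => True
  | pre _ p => IsFin p
  | par p q => Wf p ∧ Wf q
  | repl _ p => IsFin p

/-- Size: the number of prefixes. -/
def size {A : Type} : Proc A → ℕ
  | nil => 0
  | pre _ p => size p + 1
  | par p q => size p + size q
  | repl _ p => size p + 1

/-- `reps n p` is the parallel composition of `n` copies of `p`. -/
def reps {A : Type} : ℕ → Proc A → Proc A
  | 0, _ => nil
  | n+1, p => par p (reps n p)

/-- `bang F` is `!F`: for `F = α₁.F₁ | ... | αk.Fk` it is `!α₁.F₁ | ... | !αk.Fk`. -/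
def bang {A : Type} : Proc A → Proc A
  | nil => nil
  | pre a p => repl a p
  | par p q => par (bang p) (bang q)
  | repl a p => repl a p

end Proc

/-- The labelled transition system (no synchronisation). -/
inductive Step {A : Type} : Proc A → A → Proc A → Prop where
  | pre {a : A} {p : Proc A} : Step (Proc.pre a p) a p
  | repl {a : A} {p : Proc A} :
      Step (Proc.repl a p) a (Proc.par (Proc.repl a p) p)
  | parL {p : Proc A} {a : A} {p' : Proc A} (q : Proc A) :
      Step p a p' → Step (Proc.par p q) a (Proc.par p' q)
  | parR {q : Proc A} {a : A} {q' : Proc A} (p : Proc A) :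
      Step q a q' → Step (Proc.par p q) a (Proc.par p q')

/-- Strong bisimulations. -/
def IsBisim {A : Type} (R : Proc A → Proc A → Prop) : Prop :=
  Symmetric R ∧
    ∀ p q, R p q → ∀ a p', Step p a p' → ∃ q', Step q a q' ∧ R p' q'

/-- Strong bisimilarity `~`: the greatest strong bisimulation. -/
def Bisim {A : Type} (p q : Proc A) : Prop :=
  ∃ R, IsBisim R ∧ R p q

/-- The congruence `≡D`: the smallest congruence generated by the abelian
monoid laws for parallel composition (neutral element `0`) and the
distribution law `α.(F | α.F | ... | α.F) = α.F | α.F | ... | α.F`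
(with as many occurrences of `F` on both sides). -/
inductive EqD {A : Type} : Proc A → Proc A → Prop where
  | refl (p : Proc A) : EqD p p
  | symm {p q : Proc A} : EqD p q → EqD q p
  | trans {p q r : Proc A} : EqD p q → EqD q r → EqD p r
  | parComm (p q : Proc A) : EqD (Proc.par p q) (Proc.par q p)
  | parAssoc (p q r : Proc A) :
      EqD (Proc.par (Proc.par p q) r) (Proc.par p (Proc.par q r))
  | parNil (p : Proc A) : EqD (Proc.par p Proc.nil) p
  | distr (a : A) (F : Proc A) (n : ℕ) (hF : F.IsFin) :
      EqD (Proc.pre a (Proc.par F (Proc.reps n (Proc.pre a F))))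
          (Proc.reps (n + 1) (Proc.pre a F))
  | congPre (a : A) {p q : Proc A} : EqD p q → EqD (Proc.pre a p) (Proc.pre a q)
  | congPar {p p' q q' : Proc A} :
      EqD p p' → EqD q q' → EqD (Proc.par p q) (Proc.par p' q')
  | congRepl (a : A) {p q : Proc A} : EqD p q → EqD (Proc.repl a p) (Proc.repl a q)

/-- Finite (single-hole) contexts `D ::= [] | α.D | D|F`. -/
inductive FCtx (A : Type) where
  | hole : FCtx A
  | pre : A → FCtx A → FCtx A
  | par : FCtx A → Proc A → FCtx A

/-- Filling the hole of a finite context. -/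
def FCtx.fill {A : Type} : FCtx A → Proc A → Proc A
  | .hole, p => p
  | .pre a d, p => Proc.pre a (d.fill p)
  | .par d f, p => Proc.par (d.fill p) f

/-- Well-formedness of a finite context: the processes placed in parallel
are finite. -/
def FCtx.Wf {A : Type} : FCtx A → Prop
  | .hole => True
  | .pre _ d => d.Wf
  | .par d f => d.Wf ∧ f.IsFin

/-- Single-hole contexts `C ::= D | !α.D | C|P` (the hole never occurs
directly under a replication). -/
inductive Ctx (A : Type) where
  | ofD : FCtx A → Ctx A
  | repl : A → FCtx A → Ctx A
  | par : Ctx A → Proc A → Ctx A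

/-- Filling the hole of a context. -/
def Ctx.fill {A : Type} : Ctx A → Proc A → Proc A
  | .ofD d, p => d.fill p
  | .repl a d, p => Proc.repl a (d.fill p)
  | .par c q, p => Proc.par (c.fill p) q

/-- Well-formedness of a context. -/
def Ctx.Wf {A : Type} : Ctx A → Prop
  | .ofD d => d.Wf
  | .repl _ d => d.Wf
  | .par c p => c.Wf ∧ p.Wf

/-- `k` consecutive transitions. -/
inductive NSteps {A : Type} : Proc A → ℕ → Proc A → Prop where
  | zero (p : Proc A) : NSteps p 0 p
  | succ {p : Proc A} {a : A} {p' : Proc A} {k : ℕ} {q : Proc A} :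
      Step p a p' → NSteps p' k q → NSteps p (k + 1) q

/-- `P ⇒k Q`: `k` transitions from `P` reach a process `≡D Q`. -/
def Reduct {A : Type} (p : Proc A) (k : ℕ) (q : Proc A) : Prop :=
  ∃ p', NSteps p k p' ∧ EqD p' q

/-- `TopRepl S a G` holds when `!a.G` is one of the (top-level) replicated
parallel components of `S`. -/
inductive TopRepl {A : Type} : Proc A → A → Proc A → Prop where
  | repl (a : A) (p : Proc A) : TopRepl (Proc.repl a p) a p
  | parL {p : Proc A} {a : A} {r : Proc A} (q : Proc A) :
      TopRepl p a r → TopRepl (Proc.par p q) a r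
  | parR {q : Proc A} {a : A} {r : Proc A} (p : Proc A) :
      TopRepl q a r → TopRepl (Proc.par p q) a r

/-- `S` has only replicated components: `S = ∏i !αi.Si`. -/
def ReplOnly {A : Type} : Proc A → Prop
  | .nil => True
  | .pre _ _ => False
  | .par p q => ReplOnly p ∧ ReplOnly q
  | .repl _ p => p.IsFin

/-- `S ⫫ F` : for no component `!αi.Si` of `S` and no `k` do we have
`F ⇒k αi.Si`. -/
def Dis {A : Type} (S F : Proc A) : Prop :=
  ∀ a G, TopRepl S a G → ∀ k, ¬ Reduct F k (Proc.pre a G)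

/-- `S ▷ R` : there is `k > 0` with `S ⇒k S | R`. -/
def Purg {A : Type} (S R : Proc A) : Prop :=
  ∃ k, 0 < k ∧ Reduct S k (Proc.par S R)

/-- A process is a seed if no (well-formed) process of strictly smaller
size is bisimilar to it. -/
def IsSeed {A : Type} (p : Proc A) : Prop :=
  p.Wf ∧ ∀ q : Proc A, q.Wf → Bisim q p → p.size ≤ q.size

/-- The rewriting relation `⤳_T` (first argument), defined modulo `≡D` by
the axioms (B1) `C[α.F] ⤳_{!α.F|F'} C[0]` and (B2) `!α.F | !α.F | P ⤳_Q !α.F | P`. -/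
inductive Rw {A : Type} : Proc A → Proc A → Proc A → Prop where
  | B1 {a : A} {F F' : Proc A} (C : Ctx A) :
      F.IsFin → F'.Wf → C.Wf →
      Rw (Proc.par (Proc.repl a F) F') (C.fill (Proc.pre a F)) (C.fill Proc.nil)
  | B2 {a : A} {F P Q : Proc A} :
      F.IsFin → P.Wf → Q.Wf →
      Rw Q (Proc.par (Proc.repl a F) (Proc.par (Proc.repl a F) P))
           (Proc.par (Proc.repl a F) P)
  | eqD {T T' P P' Q Q' : Proc A} :
      EqD T T' → EqD P P' → Rw T' P' Q' → EqD Q Q' → Rw T P Q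

/-- `⤳*_T` : the reflexive transitive closure of `⤳_T`. -/
def RwStar {A : Type} (T : Proc A) : Proc A → Proc A → Prop :=
  Relation.ReflTransGen (Rw T)

/-- Convertibility `P ⋈ Q`: some process `T` satisfies `P ⤳*_T T` and `Q ⤳*_T T`. -/
def Convert {A : Type} (P Q : Proc A) : Prop :=
  ∃ T : Proc A, T.Wf ∧ RwStar T P T ∧ RwStar T Q T

/-- `∏i αi.Fi` for a list of prefixed components. -/
def prodPre {A : Type} (l : List (A × Proc A)) : Proc A :=
  (l.map fun x => Proc.pre x.1 x.2).foldr Proc.par Proc.nil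

/-- `∏i !αi.Fi` for a list of prefixed components. -/
def bangProd {A : Type} (l : List (A × Proc A)) : Proc A :=
  (l.map fun x => Proc.repl x.1 x.2).foldr Proc.par Proc.nil

end CCS

/-!
Peel off the finite parts one prefix at a time: each move of `F₁'` in
`!F₁ | F₁' ~ !F₂ | F₂'` is answered either inside `F₂'` or by `!F₂`, which only adds a finite
residual. This gives finite `H`, `H'` with `!F₁ ~ !F₂ | H` and `!F₂ ~ !F₁ | H'`, hence
`!F₁ ~ !F₁ | K` for `K = H' | H`, and so `!F₁ ~ !F₁ | Kⁿ` for every `n`. Within `n` moves,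
`Kⁿ | M` and `!K | M` cannot be told apart, and the transition system is finitely branching, so
bisimilarity is the intersection of its `n`-step approximants; therefore `!F₁ ~ !F₁ | !K`.
Finally `!K` absorbs `H'`: `!F₂ ~ !F₁ | H' ~ !F₁ | !K | H' ~ !F₁ | !K ~ !F₁`.
-/

namespace CCS

open Proc

variable {A : Type}

local infix:50 " ~ " => Bisim

lemma Step.par_inv {p q r : Proc A} {a : A} (h : Step (par p q) a r) :
    (∃ p', Step p a p' ∧ r = par p' q) ∨ (∃ q', Step q a q' ∧ r = par p q') := by
  cases h with
  | parL q h => exact Or.inl ⟨_, h, rfl⟩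
  | parR p h => exact Or.inr ⟨_, h, rfl⟩

lemma Step.isFin {p p' : Proc A} {a : A} (h : Step p a p') (hp : p.IsFin) : p'.IsFin := by
  induction h with
  | pre => exact hp
  | repl => cases hp
  | parL q _ ih => exact ⟨ih hp.1, hp.2⟩
  | parR p _ ih => exact ⟨hp.1, ih hp.2⟩

lemma finite_setOf_step (p : Proc A) (a : A) : {p' | Step p a p'}.Finite := by
  induction p with
  | nil => exact Set.finite_empty.subset fun _ h => nomatch h
  | pre b q => exact (Set.finite_singleton q).subset fun _ h => by cases h; rfl
  | par p q ihp ihq =>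
    refine ((ihp.image (par · q)).union (ihq.image (par p ·))).subset fun r h => ?_
    rcases Step.par_inv h with ⟨p', hp, rfl⟩ | ⟨q', hq, rfl⟩
    exacts [Or.inl ⟨p', hp, rfl⟩, Or.inr ⟨q', hq, rfl⟩]
  | repl b q => exact (Set.finite_singleton (par (repl b q) q)).subset fun _ h => by cases h; rfl

namespace Bisim

theorem refl (p : Proc A) : p ~ p :=
  ⟨Eq, ⟨fun _ _ => Eq.symm, by rintro p _ rfl a p' h; exact ⟨p', h, rfl⟩⟩, rfl⟩

theorem symm {p q : Proc A} (h : p ~ q) : q ~ p :=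
  let ⟨R, hR, hpq⟩ := h
  ⟨R, hR, hR.1 hpq⟩

theorem exists_step {p q p' : Proc A} {a : A} (h : p ~ q) (hp : Step p a p') :
    ∃ q', Step q a q' ∧ p' ~ q' :=
  let ⟨R, hR, hpq⟩ := h
  let ⟨q', hq, h'⟩ := hR.2 p q hpq a p' hp
  ⟨q', hq, R, hR, h'⟩

theorem trans {p q r : Proc A} (hpq : p ~ q) (hqr : q ~ r) : p ~ r := by
  refine ⟨fun x z => ∃ y, x ~ y ∧ y ~ z, ⟨?_, ?_⟩, q, hpq, hqr⟩
  · rintro x z ⟨y, hxy, hyz⟩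
    exact ⟨y, hyz.symm, hxy.symm⟩
  · rintro x z ⟨y, hxy, hyz⟩ a x' hx
    obtain ⟨y', hy, hxy'⟩ := hxy.exists_step hx
    obtain ⟨z', hz, hyz'⟩ := hyz.exists_step hy
    exact ⟨z', hz, y', hxy', hyz'⟩

instance : @Trans (Proc A) (Proc A) (Proc A) Bisim Bisim Bisim := ⟨trans⟩

theorem of_forth_back {R : Proc A → Proc A → Prop}
    (forth : ∀ p q, R p q → ∀ a p', Step p a p' → ∃ q', Step q a q' ∧ R p' q')
    (back : ∀ p q, R p q → ∀ a q', Step q a q' → ∃ p', Step p a p' ∧ R p' q')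
    {p q : Proc A} (h : R p q) : p ~ q := by
  refine ⟨fun x y => R x y ∨ R y x, ⟨fun _ _ => Or.symm, ?_⟩, Or.inl h⟩
  rintro x y (hxy | hyx) a x' hx
  · obtain ⟨y', hy, h'⟩ := forth x y hxy a x' hx
    exact ⟨y', hy, Or.inl h'⟩
  · obtain ⟨y', hy, h'⟩ := back y x hyx a x' hx
    exact ⟨y', hy, Or.inr h'⟩

theorem par {p q r s : Proc A} (hpq : p ~ q) (hrs : r ~ s) :
    par p r ~ par q s := by
  refine ⟨fun x y => ∃ p q r s, p ~ q ∧ r ~ s ∧ x = .par p r ∧ y = .par q s,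
    ⟨?_, ?_⟩, p, q, r, s, hpq, hrs, rfl, rfl⟩
  · rintro _ _ ⟨p, q, r, s, hpq, hrs, rfl, rfl⟩
    exact ⟨q, p, s, r, hpq.symm, hrs.symm, rfl, rfl⟩
  · rintro _ _ ⟨p, q, r, s, hpq, hrs, rfl, rfl⟩ a x' hx
    rcases hx.par_inv with ⟨p', hp, rfl⟩ | ⟨r', hr, rfl⟩
    · obtain ⟨q', hq, h'⟩ := hpq.exists_step hp
      exact ⟨_, Step.parL s hq, p', q', r, s, h', hrs, rfl, rfl⟩
    · obtain ⟨s', hs, h'⟩ := hrs.exists_step hr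
      exact ⟨_, Step.parR q hs, p, q, r', s', hpq, h', rfl, rfl⟩

end Bisim

lemma bisim_par_comm (p q : Proc A) : par p q ~ par q p := by
  refine ⟨fun x y => ∃ p q, x = par p q ∧ y = par q p, ⟨?_, ?_⟩, p, q, rfl, rfl⟩
  · rintro _ _ ⟨p, q, rfl, rfl⟩
    exact ⟨q, p, rfl, rfl⟩
  · rintro _ _ ⟨p, q, rfl, rfl⟩ a x' hx
    rcases hx.par_inv with ⟨p', hp, rfl⟩ | ⟨q', hq, rfl⟩
    · exact ⟨_, Step.parR q hp, p', q, rfl, rfl⟩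
    · exact ⟨_, Step.parL p hq, p, q', rfl, rfl⟩

lemma bisim_par_assoc (p q r : Proc A) : par (par p q) r ~ par p (par q r) := by
  refine Bisim.of_forth_back (R := fun x y => ∃ p q r, x = par (par p q) r ∧ y = par p (par q r))
    ?_ ?_ ⟨p, q, r, rfl, rfl⟩
  · rintro _ _ ⟨p, q, r, rfl, rfl⟩ a x' hx
    rcases hx.par_inv with ⟨pq', hpq, rfl⟩ | ⟨r', hr, rfl⟩
    · rcases hpq.par_inv with ⟨p', hp, rfl⟩ | ⟨q', hq, rfl⟩
      · exact ⟨_, Step.parL _ hp, p', q, r, rfl, rfl⟩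
      · exact ⟨_, Step.parR _ (Step.parL _ hq), p, q', r, rfl, rfl⟩
    · exact ⟨_, Step.parR _ (Step.parR _ hr), p, q, r', rfl, rfl⟩
  · rintro _ _ ⟨p, q, r, rfl, rfl⟩ a y' hy
    rcases hy.par_inv with ⟨p', hp, rfl⟩ | ⟨qr', hqr, rfl⟩
    · exact ⟨_, Step.parL _ (Step.parL _ hp), p', q, r, rfl, rfl⟩
    · rcases hqr.par_inv with ⟨q', hq, rfl⟩ | ⟨r', hr, rfl⟩
      · exact ⟨_, Step.parL _ (Step.parR _ hq), p, q', r, rfl, rfl⟩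
      · exact ⟨_, Step.parR _ hr, p, q, r', rfl, rfl⟩

lemma bisim_par_nil (p : Proc A) : par p nil ~ p := by
  refine Bisim.of_forth_back (R := fun x y => x = par y nil) ?_ ?_ rfl
  · rintro _ q rfl a x' hx
    rcases hx.par_inv with ⟨q', hq, rfl⟩ | ⟨_, h, _⟩
    · exact ⟨q', hq, rfl⟩
    · cases h
  · rintro _ q rfl a q' hq
    exact ⟨_, Step.parL _ hq, rfl⟩

lemma bisim_par_right_comm (p q r : Proc A) : par (par p q) r ~ par (par p r) q :=
  calc par (par p q) r
      _ ~ par p (par q r) := bisim_par_assoc p q r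
      _ ~ par p (par r q) := (Bisim.refl p).par (bisim_par_comm q r)
      _ ~ par (par p r) q := (bisim_par_assoc p r q).symm

lemma bisim_par_par_par_comm (w x y z : Proc A) :
    par (par w x) (par y z) ~ par (par w y) (par x z) :=
  calc par (par w x) (par y z)
      _ ~ par (par (par w x) y) z := (bisim_par_assoc _ _ _).symm
      _ ~ par (par (par w y) x) z := (bisim_par_right_comm w x y).par (Bisim.refl z)
      _ ~ par (par w y) (par x z) := bisim_par_assoc _ _ _

lemma TopRepl.step {V V' G : Proc A} {a b : A} (hT : TopRepl V a G) (h : Step V b V') :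
    TopRepl V' a G := by
  induction h with
  | pre => cases hT
  | repl =>
    cases hT
    exact .parL _ (.repl _ _)
  | parL q _ ih =>
    cases hT with
    | parL q hT => exact .parL _ (ih hT)
    | parR p hT => exact .parR _ hT
  | parR p _ ih =>
    cases hT with
    | parL q hT => exact .parL _ hT
    | parR p hT => exact .parR _ (ih hT)

lemma TopRepl.exists_step {V G : Proc A} {a : A} (hT : TopRepl V a G) :
    ∃ V', Step V a V' ∧ V' ~ par V G := by
  induction hT with
  | repl a p => exact ⟨_, Step.repl, Bisim.refl _⟩
  | parL q _ ih =>
    obtain ⟨V', hs, hB⟩ := ih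
    exact ⟨_, Step.parL _ hs, (hB.par (Bisim.refl q)).trans (bisim_par_right_comm _ _ _)⟩
  | parR p _ ih =>
    obtain ⟨V', hs, hB⟩ := ih
    exact ⟨_, Step.parR _ hs, ((Bisim.refl p).par hB).trans (bisim_par_assoc _ _ _).symm⟩

lemma TopRepl.bisim_par_pre {V G : Proc A} {a : A} (hT : TopRepl V a G) :
    par V (pre a G) ~ V := by
  refine Bisim.of_forth_back
    (R := fun x y => x ~ y ∨ ∃ V, TopRepl V a G ∧ x = par V (pre a G) ∧ y = V)
    ?_ ?_ (Or.inr ⟨V, hT, rfl, rfl⟩)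
  · rintro x y (hxy | ⟨V, hV, rfl, rfl⟩) b x' hx
    · obtain ⟨y', hy, h'⟩ := hxy.exists_step hx
      exact ⟨y', hy, Or.inl h'⟩
    · rcases hx.par_inv with ⟨V', hV', rfl⟩ | ⟨G', hG, rfl⟩
      · exact ⟨V', hV', Or.inr ⟨V', hV.step hV', rfl, rfl⟩⟩
      · cases hG
        obtain ⟨V', hs, hB⟩ := hV.exists_step
        exact ⟨V', hs, Or.inl hB.symm⟩
  · rintro x y (hxy | ⟨V, hV, rfl, rfl⟩) b y' hy
    · obtain ⟨x', hx, h'⟩ := hxy.symm.exists_step hy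
      exact ⟨x', hx, Or.inl h'.symm⟩
    · exact ⟨_, Step.parL _ hy, Or.inr ⟨y', hV.step hy, rfl, rfl⟩⟩

lemma bisim_bang_par_self {F : Proc A} (hF : F.IsFin) : par F.bang F ~ F.bang := by
  induction F with
  | nil => exact bisim_par_nil _
  | pre a p => exact (TopRepl.repl a p).bisim_par_pre
  | par p q ihp ihq => exact (bisim_par_par_par_comm _ _ _ _).trans ((ihp hF.1).par (ihq hF.2))
  | repl => cases hF

lemma bisim_bang_par_left {p q : Proc A} (p' : Proc A) (hq : q.IsFin) :
    par (par p.bang p') q.bang ~ par (par p q).bang (par p' q) :=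
  calc par (par p.bang p') q.bang
      _ ~ par (par p.bang p') (par q.bang q) := (Bisim.refl _).par (bisim_bang_par_self hq).symm
      _ ~ par (par p q).bang (par p' q) := bisim_par_par_par_comm _ _ _ _

lemma bisim_bang_par_right {p q : Proc A} (q' : Proc A) (hp : p.IsFin) :
    par p.bang (par q.bang q') ~ par (par p q).bang (par p q') :=
  calc par p.bang (par q.bang q')
      _ ~ par (par p.bang p) (par q.bang q') := (bisim_bang_par_self hp).symm.par (Bisim.refl _)
      _ ~ par (par p q).bang (par p q') := bisim_par_par_par_comm _ _ _ _

lemma exists_step_bang_of_step {K K' : Proc A} {a : A} (hK : K.IsFin) (h : Step K a K') :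
    ∃ W, Step K.bang a W ∧ W ~ par K.bang K' := by
  induction h with
  | pre => exact ⟨_, Step.repl, Bisim.refl _⟩
  | repl => cases hK
  | parL q _ ih =>
    obtain ⟨W, hs, hW⟩ := ih hK.1
    exact ⟨_, Step.parL _ hs, (hW.par (Bisim.refl _)).trans (bisim_bang_par_left _ hK.2)⟩
  | parR p _ ih =>
    obtain ⟨W, hs, hW⟩ := ih hK.2
    exact ⟨_, Step.parR _ hs, ((Bisim.refl _).par hW).trans (bisim_bang_par_right _ hK.1)⟩

lemma exists_step_of_step_bang {K W : Proc A} {a : A} (hK : K.IsFin) (h : Step K.bang a W) :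
    ∃ K', Step K a K' ∧ W ~ par K.bang K' := by
  induction K generalizing W with
  | nil => cases h
  | pre b p =>
    cases h
    exact ⟨p, Step.pre, Bisim.refl _⟩
  | par p q ihp ihq =>
    rcases h.par_inv with ⟨W', hs, rfl⟩ | ⟨W', hs, rfl⟩
    · obtain ⟨p', hp, hW⟩ := ihp hK.1 hs
      exact ⟨_, Step.parL _ hp, (hW.par (Bisim.refl _)).trans (bisim_bang_par_left _ hK.2)⟩
    · obtain ⟨q', hq, hW⟩ := ihq hK.2 hs
      exact ⟨_, Step.parR _ hq, ((Bisim.refl _).par hW).trans (bisim_bang_par_right _ hK.1)⟩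
  | repl => cases hK

lemma exists_step_of_step_reps {K R : Proc A} {a : A} {n : ℕ} (h : Step (reps (n + 1) K) a R) :
    ∃ K', Step K a K' ∧ R ~ par (reps n K) K' := by
  induction n generalizing R with
  | zero =>
    rcases h.par_inv with ⟨K', hK', rfl⟩ | ⟨_, h, _⟩
    · exact ⟨K', hK', bisim_par_comm _ _⟩
    · cases h
  | succ n ih =>
    rcases h.par_inv with ⟨K', hK', rfl⟩ | ⟨R', hR', rfl⟩
    · exact ⟨K', hK', bisim_par_comm _ _⟩
    · obtain ⟨K', hK', hR⟩ := ih hR'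
      exact ⟨K', hK', ((Bisim.refl K).par hR).trans (bisim_par_assoc _ _ _).symm⟩

lemma exists_bisim_bang_par_of_bisim_par {F P W W₂ : Proc A} (hF : F.IsFin) (hW : W.IsFin)
    (hW₂ : W₂.IsFin) (h : par P W ~ par F.bang W₂) :
    ∃ H, H.IsFin ∧ P ~ par F.bang H := by
  induction W generalizing P W₂ with
  | nil => exact ⟨W₂, hW₂, (bisim_par_nil P).symm.trans h⟩
  | pre a W ih =>
    obtain ⟨Z, hZ, hWZ⟩ := h.exists_step (Step.parR P Step.pre)
    rcases hZ.par_inv with ⟨B', hB', rfl⟩ | ⟨W₂', hW₂', rfl⟩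
    · obtain ⟨G, hG, hB'G⟩ := exists_step_of_step_bang hF hB'
      exact ih hW (W₂ := par G W₂) ⟨hG.isFin hF, hW₂⟩
        (hWZ.trans ((hB'G.par (Bisim.refl W₂)).trans (bisim_par_assoc _ _ _)))
    · exact ih hW (hW₂'.isFin hW₂) hWZ
  | par p q ihp ihq =>
    obtain ⟨H, hH, hPH⟩ := ihq hW.2 hW₂ ((bisim_par_assoc P p q).trans h)
    exact ihp hW.1 hH hPH
  | repl => cases hW


def BisimApprox : ℕ → Proc A → Proc A → Prop
  | 0, _, _ => True
  | k + 1, p, q =>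
      (∀ a p', Step p a p' → ∃ q', Step q a q' ∧ BisimApprox k p' q') ∧
      (∀ a q', Step q a q' → ∃ p', Step p a p' ∧ BisimApprox k p' q')

namespace BisimApprox

theorem symm : ∀ {k : ℕ} {p q : Proc A}, BisimApprox k p q → BisimApprox k q p
  | 0, _, _, _ => trivial
  | _ + 1, _, _, ⟨forth, back⟩ =>
    ⟨fun a q' hq => let ⟨p', hp, h⟩ := back a q' hq; ⟨p', hp, h.symm⟩,
     fun a p' hp => let ⟨q', hq, h⟩ := forth a p' hp; ⟨q', hq, h.symm⟩⟩

theorem trans : ∀ {k : ℕ} {p q r : Proc A},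
    BisimApprox k p q → BisimApprox k q r → BisimApprox k p r
  | 0, _, _, _, _, _ => trivial
  | _ + 1, _, _, _, ⟨forth₁, back₁⟩, ⟨forth₂, back₂⟩ =>
    ⟨fun a p' hp =>
      let ⟨q', hq, h₁⟩ := forth₁ a p' hp
      let ⟨r', hr, h₂⟩ := forth₂ a q' hq
      ⟨r', hr, h₁.trans h₂⟩,
     fun a r' hr =>
      let ⟨q', hq, h₂⟩ := back₂ a r' hr
      let ⟨p', hp, h₁⟩ := back₁ a q' hq
      ⟨p', hp, h₁.trans h₂⟩⟩

theorem mono : ∀ {j k : ℕ} {p q : Proc A}, j ≤ k → BisimApprox k p q → BisimApprox j p q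
  | 0, _, _, _, _, _ => trivial
  | _ + 1, 0, _, _, hjk, _ => absurd hjk (by omega)
  | _ + 1, _ + 1, _, _, hjk, ⟨forth, back⟩ =>
    ⟨fun a p' hp => let ⟨q', hq, h⟩ := forth a p' hp; ⟨q', hq, h.mono (by omega)⟩,
     fun a q' hq => let ⟨p', hp, h⟩ := back a q' hq; ⟨p', hp, h.mono (by omega)⟩⟩

end BisimApprox

theorem Bisim.bisimApprox {p q : Proc A} (h : p ~ q) : ∀ k, BisimApprox k p q
  | 0 => trivial
  | k + 1 =>
    ⟨fun _ _ hp => let ⟨q', hq, h'⟩ := h.exists_step hp; ⟨q', hq, h'.bisimApprox k⟩,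
     fun _ _ hq => let ⟨p', hp, h'⟩ := h.symm.exists_step hq; ⟨p', hp, (h'.bisimApprox k).symm⟩⟩

theorem bisim_of_forall_bisimApprox {p q : Proc A} (h : ∀ k, BisimApprox k p q) : p ~ q := by
  refine ⟨fun p q => ∀ k, BisimApprox k p q, ⟨fun p q h k => (h k).symm, ?_⟩, h⟩
  intro p q h a p' hp
  have : ∀ k, ∃ q' : {q' | Step q a q'}, BisimApprox k p' q' := fun k =>
    let ⟨q', hq, h'⟩ := (h (k + 1)).1 a p' hp
    ⟨⟨q', hq⟩, h'⟩
  choose f hf using this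
  have := (finite_setOf_step q a).to_subtype
  -- some successor of `q` is chosen for infinitely many `k`, hence matches `p'` at every depth
  obtain ⟨q', hq'⟩ := Finite.exists_infinite_fiber f
  refine ⟨q', q'.2, fun k => ?_⟩
  obtain ⟨j, hj, hkj⟩ := (Set.infinite_coe_iff.mp hq').exists_gt k
  rw [Set.mem_preimage, Set.mem_singleton_iff] at hj
  exact (hj ▸ hf j).mono hkj.le

lemma bisimApprox_reps_par_bang_par {K : Proc A} (hK : K.IsFin) {k n : ℕ} (hkn : k ≤ n)
    (M : Proc A) :
    BisimApprox k (par (reps n K) M) (par K.bang M) := by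
  induction k generalizing n M with
  | zero => trivial
  | succ k ih =>
    obtain ⟨m, rfl⟩ : ∃ m, n = m + 1 := ⟨n - 1, by omega⟩
    have fire : ∀ {K' R W : Proc A}, R ~ par (reps m K) K' → W ~ par K.bang K' →
        BisimApprox k (par R M) (par W M) := fun hR hW =>
      ((hR.par (Bisim.refl M)).trans (bisim_par_assoc _ _ _)).bisimApprox k
        |>.trans (ih (by omega) _)
        |>.trans
          (((bisim_par_assoc _ _ _).symm.trans (hW.symm.par (Bisim.refl M))).bisimApprox k)
    constructor
    · intro a L hL
      rcases hL.par_inv with ⟨R, hR, rfl⟩ | ⟨M', hM, rfl⟩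
      · obtain ⟨K', hK', hRK⟩ := exists_step_of_step_reps hR
        obtain ⟨W, hW, hWK⟩ := exists_step_bang_of_step hK hK'
        exact ⟨_, Step.parL M hW, fire hRK hWK⟩
      · exact ⟨_, Step.parR _ hM, ih (by omega) M'⟩
    · intro a L hL
      rcases hL.par_inv with ⟨W, hW, rfl⟩ | ⟨M', hM, rfl⟩
      · obtain ⟨K', hK', hWK⟩ := exists_step_of_step_bang hK hW
        exact ⟨_, Step.parL M (Step.parL _ hK'), fire (bisim_par_comm _ _) hWK⟩
      · exact ⟨_, Step.parR _ hM, ih (by omega) M'⟩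

theorem bisim_par_bang_of_bisim_par {S K : Proc A} (hK : K.IsFin) (h : S ~ par S K) :
    S ~ par S K.bang := by
  have pump : ∀ n, S ~ par S (reps n K) := by
    intro n
    induction n with
    | zero => exact (bisim_par_nil S).symm
    | succ n ih =>
      calc S
          _ ~ par S K := h
          _ ~ par (par S (reps n K)) K := ih.par (Bisim.refl K)
          _ ~ par S (par K (reps n K)) :=
            (bisim_par_assoc _ _ _).trans ((Bisim.refl S).par (bisim_par_comm _ _))
  refine bisim_of_forall_bisimApprox fun k => ?_
  exact ((pump k).trans (bisim_par_comm _ _)).bisimApprox k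
    |>.trans (bisimApprox_reps_par_bang_par hK le_rfl S)
    |>.trans ((bisim_par_comm _ _).bisimApprox k)

end CCS

theorem bisim_bang_of_bisim_par_general {A : Type}
    (F₁ F₁' F₂ F₂' : CCS.Proc A)
    (h₁ : F₁.IsFin) (h₁' : F₁'.IsFin) (h₂ : F₂.IsFin) (h₂' : F₂'.IsFin)
    (h : CCS.Bisim (CCS.Proc.par F₁.bang F₁') (CCS.Proc.par F₂.bang F₂')) :
    CCS.Bisim F₁.bang F₂.bang := by
  open CCS Proc in
  obtain ⟨H, hH, h₁₂⟩ := exists_bisim_bang_par_of_bisim_par h₂ h₁' h₂' h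
  obtain ⟨H', hH', h₂₁⟩ := exists_bisim_bang_par_of_bisim_par h₁ h₂' h₁' h.symm
  have hK : Bisim F₁.bang (par F₁.bang (par H' H)) :=
    h₁₂.trans ((h₂₁.par (Bisim.refl H)).trans (bisim_par_assoc _ _ _))
  have hlim := bisim_par_bang_of_bisim_par (show (par H' H).IsFin from ⟨hH', hH⟩) hK
  have habsorb : Bisim (par (par H' H).bang H') (par H' H).bang :=
    (bisim_par_right_comm _ _ _).trans ((bisim_bang_par_self hH').par (Bisim.refl _))
  calc Bisim F₁.bang (par F₁.bang (par H' H).bang) := hlim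
    Bisim _ (par F₁.bang (par (par H' H).bang H')) := (Bisim.refl _).par habsorb.symm
    Bisim _ (par (par F₁.bang (par H' H).bang) H') := (bisim_par_assoc _ _ _).symm
    Bisim _ (par F₁.bang H') := hlim.symm.par (Bisim.refl H')
    Bisim _ F₂.bang := h₂₁.symm

/-- If `!F₁ | F'₁ ~ !F₂ | F'₂`, then `!F₁ ~ !F₂`. -/
theorem bisim_bang_of_bisim_par {A : Type} [Countable A]
    (F₁ F₁' F₂ F₂' : CCS.Proc A)
    (h₁ : F₁.IsFin) (h₁' : F₁'.IsFin) (h₂ : F₂.IsFin) (h₂' : F₂'.IsFin)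
    (h : CCS.Bisim (CCS.Proc.par F₁.bang F₁') (CCS.Proc.par F₂.bang F₂')) :
    CCS.Bisim F₁.bang F₂.bang :=
  bisim_bang_of_bisim_par_general F₁ F₁' F₂ F₂' h₁ h₁' h₂ h₂' h
end

section
/- If Q ⤳*_T T (Q rewrites to T in zero or more steps of the rewriting relation indexed by T), then Q ~ T. -/
namespace CCS
open Proc

variable {A : Type}

/-! ### Basic properties of bisimilarity -/

theorem bisim_refl (p : Proc A) : Bisim p p :=
  ⟨Eq, ⟨fun _ _ h => h.symm, by rintro p q rfl a p' h; exact ⟨p', h, rfl⟩⟩, rfl⟩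

theorem bisim_symm {p q : Proc A} : Bisim p q → Bisim q p
  | ⟨R, hR, h⟩ => ⟨R, hR, hR.1 h⟩

theorem bisim_step {p q : Proc A} (h : Bisim p q) {a : A} {p' : Proc A}
    (hs : Step p a p') : ∃ q', Step q a q' ∧ Bisim p' q' := by
  obtain ⟨R, hR, hpq⟩ := h
  obtain ⟨q', hq, hR'⟩ := hR.2 p q hpq a p' hs
  exact ⟨q', hq, R, hR, hR'⟩

theorem bisim_trans {p q r : Proc A} (h1 : Bisim p q) (h2 : Bisim q r) : Bisim p r := by
  refine ⟨fun x z => ∃ y, Bisim x y ∧ Bisim y z, ⟨?_, ?_⟩, q, h1, h2⟩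
  · rintro x z ⟨y, h1, h2⟩; exact ⟨y, bisim_symm h2, bisim_symm h1⟩
  · rintro x z ⟨y, hxy, hyz⟩ a x' hs
    obtain ⟨y', hy, h1⟩ := bisim_step hxy hs
    obtain ⟨z', hz, h2⟩ := bisim_step hyz hy
    exact ⟨z', hz, y', h1, h2⟩

theorem step_par_inv {p q : Proc A} {b : A} {r : Proc A} (h : Step (Proc.par p q) b r) :
    (∃ p', Step p b p' ∧ r = Proc.par p' q) ∨ (∃ q', Step q b q' ∧ r = Proc.par p q') := by
  cases h with
  | parL _ h => exact .inl ⟨_, h, rfl⟩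
  | parR _ h => exact .inr ⟨_, h, rfl⟩

/-! ### Soundness of `≡D` for bisimilarity -/

theorem eqd_swap (x y z : Proc A) :
    EqD (Proc.par x (Proc.par y z)) (Proc.par y (Proc.par x z)) :=
  (((EqD.parAssoc x y z).symm.trans
    (EqD.congPar (EqD.parComm x y) (EqD.refl z))).trans (EqD.parAssoc y x z))

theorem step_reps {a : A} {F : Proc A} :
    ∀ (m : ℕ) {b : A} {r : Proc A}, Step (Proc.reps (m+1) (Proc.pre a F)) b r →
      b = a ∧ EqD r (Proc.par F (Proc.reps m (Proc.pre a F))) := by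
  intro m
  induction m with
  | zero =>
    intro b r hs
    rcases step_par_inv hs with ⟨p', hp, rfl⟩ | ⟨q', hq, rfl⟩
    · cases hp; exact ⟨rfl, EqD.refl _⟩
    · cases hq
  | succ m ih =>
    intro b r hs
    rcases step_par_inv hs with ⟨p', hp, rfl⟩ | ⟨q', hq, rfl⟩
    · cases hp; exact ⟨rfl, EqD.refl _⟩
    · obtain ⟨rfl, he⟩ := ih hq
      refine ⟨rfl, ?_⟩
      exact (EqD.congPar (EqD.refl _) he).trans (eqd_swap _ _ _)

theorem eqd_step₂ {p q : Proc A} (h : EqD p q) :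
    (∀ b p', Step p b p' → ∃ q', Step q b q' ∧ EqD p' q') ∧
    (∀ b q', Step q b q' → ∃ p', Step p b p' ∧ EqD p' q') := by
  induction h with
  | refl p =>
    exact ⟨fun b p' h => ⟨p', h, .refl _⟩, fun b q' h => ⟨q', h, .refl _⟩⟩
  | symm h ih =>
    exact ⟨fun b p' hs => (ih.2 b p' hs).imp fun x ⟨h1, h2⟩ => ⟨h1, h2.symm⟩,
           fun b q' hs => (ih.1 b q' hs).imp fun x ⟨h1, h2⟩ => ⟨h1, h2.symm⟩⟩
  | trans h1 h2 ih1 ih2 =>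
    constructor
    · intro b p' hs
      obtain ⟨x, hx, e1⟩ := ih1.1 b p' hs
      obtain ⟨y, hy, e2⟩ := ih2.1 b x hx
      exact ⟨y, hy, e1.trans e2⟩
    · intro b q' hs
      obtain ⟨x, hx, e2⟩ := ih2.2 b q' hs
      obtain ⟨y, hy, e1⟩ := ih1.2 b x hx
      exact ⟨y, hy, e1.trans e2⟩
  | parComm p q =>
    constructor
    · intro b r hs
      rcases step_par_inv hs with ⟨p', hp, rfl⟩ | ⟨q', hq, rfl⟩
      · exact ⟨_, Step.parR _ hp, EqD.parComm _ _⟩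
      · exact ⟨_, Step.parL _ hq, EqD.parComm _ _⟩
    · intro b r hs
      rcases step_par_inv hs with ⟨q', hq, rfl⟩ | ⟨p', hp, rfl⟩
      · exact ⟨_, Step.parR _ hq, EqD.parComm _ _⟩
      · exact ⟨_, Step.parL _ hp, EqD.parComm _ _⟩
  | parAssoc p q r =>
    constructor
    · intro b x hs
      rcases step_par_inv hs with ⟨y, hy, rfl⟩ | ⟨r', hr, rfl⟩
      · rcases step_par_inv hy with ⟨p', hp, rfl⟩ | ⟨q', hq, rfl⟩
        · exact ⟨_, Step.parL _ hp, EqD.parAssoc _ _ _⟩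
        · exact ⟨_, Step.parR _ (Step.parL _ hq), EqD.parAssoc _ _ _⟩
      · exact ⟨_, Step.parR _ (Step.parR _ hr), EqD.parAssoc _ _ _⟩
    · intro b x hs
      rcases step_par_inv hs with ⟨p', hp, rfl⟩ | ⟨y, hy, rfl⟩
      · exact ⟨_, Step.parL _ (Step.parL _ hp), EqD.parAssoc _ _ _⟩
      · rcases step_par_inv hy with ⟨q', hq, rfl⟩ | ⟨r', hr, rfl⟩
        · exact ⟨_, Step.parL _ (Step.parR _ hq), EqD.parAssoc _ _ _⟩
        · exact ⟨_, Step.parR _ hr, EqD.parAssoc _ _ _⟩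
  | parNil p =>
    constructor
    · intro b r hs
      rcases step_par_inv hs with ⟨p', hp, rfl⟩ | ⟨q', hq, rfl⟩
      · exact ⟨_, hp, EqD.parNil _⟩
      · cases hq
    · intro b r hs
      exact ⟨_, Step.parL _ hs, EqD.parNil _⟩
  | distr a F n hF =>
    constructor
    · intro b r hs
      cases hs
      exact ⟨_, Step.parL _ Step.pre, EqD.refl _⟩
    · intro b r hs
      obtain ⟨rfl, he⟩ := step_reps n hs
      exact ⟨_, Step.pre, he.symm⟩
  | congPre a h ih =>
    constructor
    · intro b r hs; cases hs; exact ⟨_, Step.pre, h⟩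
    · intro b r hs; cases hs; exact ⟨_, Step.pre, h⟩
  | congPar h1 h2 ih1 ih2 =>
    constructor
    · intro b r hs
      rcases step_par_inv hs with ⟨p', hp, rfl⟩ | ⟨q', hq, rfl⟩
      · obtain ⟨x, hx, e⟩ := ih1.1 b p' hp
        exact ⟨_, Step.parL _ hx, EqD.congPar e h2⟩
      · obtain ⟨x, hx, e⟩ := ih2.1 b q' hq
        exact ⟨_, Step.parR _ hx, EqD.congPar h1 e⟩
    · intro b r hs
      rcases step_par_inv hs with ⟨p', hp, rfl⟩ | ⟨q', hq, rfl⟩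
      · obtain ⟨x, hx, e⟩ := ih1.2 b p' hp
        exact ⟨_, Step.parL _ hx, EqD.congPar e h2⟩
      · obtain ⟨x, hx, e⟩ := ih2.2 b q' hq
        exact ⟨_, Step.parR _ hx, EqD.congPar h1 e⟩
  | congRepl a h ih =>
    constructor
    · intro b r hs; cases hs
      exact ⟨_, Step.repl, EqD.congPar (EqD.congRepl a h) h⟩
    · intro b r hs; cases hs
      exact ⟨_, Step.repl, EqD.congPar (EqD.congRepl a h) h⟩

theorem eqd_bisim {p q : Proc A} (h : EqD p q) : Bisim p q :=
  ⟨EqD, ⟨fun _ _ h => h.symm, fun p q hpq a p' hs => (eqd_step₂ hpq).1 a p' hs⟩, h⟩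

theorem bisim_par_congr {p p' q q' : Proc A} (h1 : Bisim p p') (h2 : Bisim q q') :
    Bisim (Proc.par p q) (Proc.par p' q') := by
  refine ⟨fun x y => ∃ u v u' v', x = Proc.par u v ∧ y = Proc.par u' v' ∧
    Bisim u u' ∧ Bisim v v', ⟨?_, ?_⟩, p, q, p', q', rfl, rfl, h1, h2⟩
  · rintro x y ⟨u, v, u', v', rfl, rfl, h1, h2⟩
    exact ⟨u', v', u, v, rfl, rfl, bisim_symm h1, bisim_symm h2⟩
  · rintro x y ⟨u, v, u', v', rfl, rfl, h1, h2⟩ a x' hs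
    rcases step_par_inv hs with ⟨w, hw, rfl⟩ | ⟨w, hw, rfl⟩
    · obtain ⟨w', hw', hb⟩ := bisim_step h1 hw
      exact ⟨_, Step.parL _ hw', w, v, w', v', rfl, rfl, hb, h2⟩
    · obtain ⟨w', hw', hb⟩ := bisim_step h2 hw
      exact ⟨_, Step.parR _ hw', u, w, u', w', rfl, rfl, h1, hb⟩

/-! ### Replication absorption (soundness of B2) -/

theorem bisim_absorb (a : A) (F P : Proc A) :
    Bisim (Proc.par (Proc.repl a F) (Proc.par (Proc.repl a F) P))
          (Proc.par (Proc.repl a F) P) := by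
  refine ⟨fun x y =>
    (∃ P, Bisim x (Proc.par (Proc.repl a F) (Proc.par (Proc.repl a F) P)) ∧ Bisim y (Proc.par (Proc.repl a F) P)) ∨
    (∃ P, Bisim y (Proc.par (Proc.repl a F) (Proc.par (Proc.repl a F) P)) ∧ Bisim x (Proc.par (Proc.repl a F) P)),
    ⟨?_, ?_⟩, .inl ⟨P, bisim_refl _, bisim_refl _⟩⟩
  · rintro x y (⟨P, h1, h2⟩ | ⟨P, h1, h2⟩)
    · exact .inr ⟨P, h1, h2⟩
    · exact .inl ⟨P, h1, h2⟩
  · have sw : ∀ P : Proc A, EqD (Proc.par (Proc.par (Proc.repl a F) F) (Proc.par (Proc.repl a F) P))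
        (Proc.par (Proc.repl a F) (Proc.par (Proc.repl a F) (Proc.par F P))) := fun P =>
      (EqD.parAssoc _ _ _).trans (EqD.congPar (EqD.refl _) (eqd_swap _ _ _))
    rintro x y (⟨P, h1, h2⟩ | ⟨P, h1, h2⟩) b x' hs
    · -- x plays a move: mirror it in `(Proc.repl a F) | ((Proc.repl a F) | P)`
      obtain ⟨z, hz, hxz⟩ := bisim_step h1 hs
      rcases step_par_inv hz with ⟨z1, hz1, rfl⟩ | ⟨z2, hz2, rfl⟩
      · cases hz1
        -- z = ((Proc.repl a F)|F) | ((Proc.repl a F)|P), b = a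
        obtain ⟨y', hy', hb⟩ := bisim_step (bisim_symm h2) (Step.parL P Step.repl)
        refine ⟨y', hy', .inl ⟨Proc.par F P, ?_, ?_⟩⟩
        · exact bisim_trans hxz (eqd_bisim (sw P))
        · exact bisim_trans (bisim_symm hb) (eqd_bisim (EqD.parAssoc _ _ _))
      · rcases step_par_inv hz2 with ⟨z3, hz3, rfl⟩ | ⟨P', hP, rfl⟩
        · cases hz3
          -- z = (Proc.repl a F) | (((Proc.repl a F)|F) | P), b = a
          obtain ⟨y', hy', hb⟩ := bisim_step (bisim_symm h2) (Step.parL P Step.repl)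
          refine ⟨y', hy', .inl ⟨Proc.par F P, ?_, ?_⟩⟩
          · refine bisim_trans hxz (eqd_bisim ?_)
            exact EqD.congPar (EqD.refl _) (EqD.parAssoc _ _ _)
          · exact bisim_trans (bisim_symm hb) (eqd_bisim (EqD.parAssoc _ _ _))
        · -- z = (Proc.repl a F) | ((Proc.repl a F) | P'), P → P'
          obtain ⟨y', hy', hb⟩ := bisim_step (bisim_symm h2) (Step.parR (Proc.repl a F) hP)
          exact ⟨y', hy', .inl ⟨P', hxz, bisim_symm hb⟩⟩
    · -- x plays the role of `(Proc.repl a F) | P`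
      obtain ⟨z, hz, hxz⟩ := bisim_step h2 hs
      rcases step_par_inv hz with ⟨z1, hz1, rfl⟩ | ⟨P', hP, rfl⟩
      · cases hz1
        -- z = ((Proc.repl a F)|F) | P, b = a
        obtain ⟨y', hy', hb⟩ := bisim_step (bisim_symm h1)
          (Step.parL (Proc.par (Proc.repl a F) P) Step.repl)
        refine ⟨y', hy', .inr ⟨Proc.par F P, ?_, ?_⟩⟩
        · exact bisim_trans (bisim_symm hb) (eqd_bisim (sw P))
        · exact bisim_trans hxz (eqd_bisim (EqD.parAssoc _ _ _))
      · -- z = (Proc.repl a F) | P', P → P'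
        obtain ⟨y', hy', hb⟩ := bisim_step (bisim_symm h1) (Step.parR (Proc.repl a F) (Step.parR (Proc.repl a F) hP))
        exact ⟨y', hy', .inr ⟨P', bisim_symm hb, hxz⟩⟩

/-! ### Insertion of `a.F` components (for B1) -/

/-- `Ext a F p q` : `q` is `p` with finitely many components `a.F` inserted
(at positions where `p` has `0`). -/
inductive Ext (a : A) (F : Proc A) : Proc A → Proc A → Prop where
  | refl (p : Proc A) : Ext a F p p
  | pre (b : A) {p q : Proc A} : Ext a F p q → Ext a F (Proc.pre b p) (Proc.pre b q)
  | par {p q p' q' : Proc A} : Ext a F p p' → Ext a F q q' →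
      Ext a F (Proc.par p q) (Proc.par p' q')
  | repl (b : A) {p q : Proc A} : Ext a F p q → Ext a F (Proc.repl b p) (Proc.repl b q)
  | insNil : Ext a F Proc.nil (Proc.pre a F)

theorem ext_fillF (a : A) (F : Proc A) :
    ∀ d : FCtx A, Ext a F (d.fill Proc.nil) (d.fill (Proc.pre a F))
  | .hole => .insNil
  | .pre b d => .pre b (ext_fillF a F d)
  | .par d f => .par (ext_fillF a F d) (.refl f)

theorem ext_fillC (a : A) (F : Proc A) :
    ∀ c : Ctx A, Ext a F (c.fill Proc.nil) (c.fill (Proc.pre a F))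
  | .ofD d => ext_fillF a F d
  | .repl b d => .repl b (ext_fillF a F d)
  | .par c p => .par (ext_fillC a F c) (.refl p)

theorem ext_forward {a : A} {F p q : Proc A} (h : Ext a F p q) :
    ∀ {b : A} {q' : Proc A}, Step q b q' →
      (∃ p', Step p b p' ∧ Ext a F p' q') ∨
      (b = a ∧ ∃ q₀, Ext a F p q₀ ∧ Bisim q' (Proc.par q₀ F)) := by
  induction h with
  | refl p => exact fun hs => .inl ⟨_, hs, .refl _⟩
  | pre b h ih =>
    intro c q' hs; cases hs; exact .inl ⟨_, Step.pre, h⟩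
  | par h1 h2 ih1 ih2 =>
    intro b q' hs
    rcases step_par_inv hs with ⟨w, hw, rfl⟩ | ⟨w, hw, rfl⟩
    · rcases ih1 hw with ⟨p1', hp, he⟩ | ⟨rfl, q0, he, hb⟩
      · exact .inl ⟨_, Step.parL _ hp, .par he h2⟩
      · refine .inr ⟨rfl, _, .par he h2, ?_⟩
        refine bisim_trans (bisim_par_congr hb (bisim_refl _)) (eqd_bisim ?_)
        exact ((EqD.parAssoc _ _ _).trans
          (EqD.congPar (EqD.refl _) (EqD.parComm _ _))).trans (EqD.parAssoc _ _ _).symm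
    · rcases ih2 hw with ⟨p2', hp, he⟩ | ⟨rfl, q0, he, hb⟩
      · exact .inl ⟨_, Step.parR _ hp, .par h1 he⟩
      · refine .inr ⟨rfl, _, .par h1 he, ?_⟩
        exact bisim_trans (bisim_par_congr (bisim_refl _) hb)
          (eqd_bisim (EqD.parAssoc _ _ _).symm)
  | repl b h ih =>
    intro c q' hs; cases hs
    exact .inl ⟨_, Step.repl, .par (.repl b h) h⟩
  | insNil =>
    intro b q' hs; cases hs
    exact .inr ⟨rfl, Proc.nil, .refl _,
      bisim_symm (eqd_bisim ((EqD.parComm _ _).trans (EqD.parNil _)))⟩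

theorem ext_backward {a : A} {F p q : Proc A} (h : Ext a F p q) :
    ∀ {b : A} {p' : Proc A}, Step p b p' → ∃ q', Step q b q' ∧ Ext a F p' q' := by
  induction h with
  | refl p => exact fun hs => ⟨_, hs, .refl _⟩
  | pre b h ih => intro c p' hs; cases hs; exact ⟨_, Step.pre, h⟩
  | par h1 h2 ih1 ih2 =>
    intro b p' hs
    rcases step_par_inv hs with ⟨w, hw, rfl⟩ | ⟨w, hw, rfl⟩
    · obtain ⟨w', hw', he⟩ := ih1 hw
      exact ⟨_, Step.parL _ hw', .par he h2⟩
    · obtain ⟨w', hw', he⟩ := ih2 hw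
      exact ⟨_, Step.parR _ hw', .par h1 he⟩
  | repl b h ih =>
    intro c p' hs; cases hs
    exact ⟨_, Step.repl, .par (.repl b h) h⟩
  | insNil => intro b p' hs; cases hs

/-- Invariance of "bisimilar to `!a.F | w` for some `w`" under transitions. -/
theorem good_step {a : A} {F p : Proc A}
    (hg : ∃ w, Bisim p (Proc.par (Proc.repl a F) w)) {b : A} {p' : Proc A}
    (hs : Step p b p') : ∃ w, Bisim p' (Proc.par (Proc.repl a F) w) := by
  obtain ⟨w, hw⟩ := hg
  obtain ⟨z, hz, hbz⟩ := bisim_step hw hs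
  rcases step_par_inv hz with ⟨z1, hz1, rfl⟩ | ⟨w', hw', rfl⟩
  · cases hz1
    exact ⟨_, bisim_trans hbz (eqd_bisim (EqD.parAssoc _ _ _))⟩
  · exact ⟨w', hbz⟩

theorem good_move {a : A} {F p : Proc A}
    (hg : ∃ w, Bisim p (Proc.par (Proc.repl a F) w)) :
    ∃ p₂, Step p a p₂ ∧ Bisim p₂ (Proc.par p F) := by
  obtain ⟨w, hw⟩ := hg
  obtain ⟨p₂, hp₂, hb⟩ := bisim_step (bisim_symm hw) (Step.parL w Step.repl)
  refine ⟨p₂, hp₂, bisim_trans (bisim_symm hb) ?_⟩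
  have e : EqD (Proc.par (Proc.par (Proc.repl a F) F) w)
      (Proc.par (Proc.par (Proc.repl a F) w) F) :=
    ((EqD.parAssoc _ _ _).trans
      (EqD.congPar (EqD.refl _) (EqD.parComm F w))).trans (EqD.parAssoc _ _ _).symm
  exact bisim_trans (eqd_bisim e) (bisim_par_congr (bisim_symm hw) (bisim_refl F))

/-- Key lemma: if `p ~ !a.F | w` and `q` is `p` with extra `a.F` components
inserted, then `q ~ p`. -/
theorem bisim_ext {a : A} {F p q : Proc A} (he : Ext a F p q)
    (hg : ∃ w, Bisim p (Proc.par (Proc.repl a F) w)) : Bisim q p := by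
  refine ⟨fun u v =>
    (∃ p q, Ext a F p q ∧ Bisim u q ∧ Bisim v p ∧
      ∃ w, Bisim p (Proc.par (Proc.repl a F) w)) ∨
    (∃ p q, Ext a F p q ∧ Bisim v q ∧ Bisim u p ∧
      ∃ w, Bisim p (Proc.par (Proc.repl a F) w)),
    ⟨?_, ?_⟩, .inl ⟨p, q, he, bisim_refl q, bisim_refl p, hg⟩⟩
  · rintro u v (⟨p, q, he, h1, h2, hg⟩ | ⟨p, q, he, h1, h2, hg⟩)
    · exact .inr ⟨p, q, he, h1, h2, hg⟩
    · exact .inl ⟨p, q, he, h1, h2, hg⟩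
  · rintro u v (⟨p, q, he, huq, hvp, hg⟩ | ⟨p, q, he, hvq, hup, hg⟩) b u' hs
    · obtain ⟨q', hq, hu'q'⟩ := bisim_step huq hs
      rcases ext_forward he hq with ⟨p', hp, he'⟩ | ⟨rfl, q₀, he0, hb⟩
      · obtain ⟨v', hv, hp'v'⟩ := bisim_step (bisim_symm hvp) hp
        exact ⟨v', hv, .inl ⟨p', q', he', hu'q', bisim_symm hp'v', good_step hg hp⟩⟩
      · obtain ⟨p₂, hp₂, hb2⟩ := good_move hg
        obtain ⟨v', hv, hp2v'⟩ := bisim_step (bisim_symm hvp) hp₂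
        refine ⟨v', hv, .inl ⟨Proc.par p F, Proc.par q₀ F, .par he0 (.refl F),
          bisim_trans hu'q' hb, bisim_trans (bisim_symm hp2v') hb2, ?_⟩⟩
        obtain ⟨w, hw⟩ := hg
        exact ⟨Proc.par w F, bisim_trans (bisim_par_congr hw (bisim_refl F))
          (eqd_bisim (EqD.parAssoc _ _ _))⟩
    · obtain ⟨p', hp, hu'p'⟩ := bisim_step hup hs
      obtain ⟨q', hq, he'⟩ := ext_backward he hp
      obtain ⟨v', hv, hq'v'⟩ := bisim_step (bisim_symm hvq) hq
      exact ⟨v', hv, .inr ⟨p', q', he', bisim_symm hq'v', hu'p', good_step hg hp⟩⟩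

/-! ### Backward preservation along rewriting -/

theorem rw_bisim {T P Q : Proc A} (h : Rw T P Q) : Bisim Q T → Bisim P T := by
  induction h with
  | B1 C hF hF' hC =>
    intro hQ
    exact bisim_trans (bisim_ext (ext_fillC _ _ C) ⟨_, hQ⟩) hQ
  | B2 hF hP hQw =>
    intro hQ
    exact bisim_trans (bisim_absorb _ _ _) hQ
  | eqD hT hP hRw hQeq ih =>
    intro hQ
    have hQ' := bisim_trans (bisim_symm (eqd_bisim hQeq)) (bisim_trans hQ (eqd_bisim hT))
    exact bisim_trans (eqd_bisim hP)
      (bisim_trans (ih hQ') (bisim_symm (eqd_bisim hT)))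

end CCS

/-- If `Q ⤳*_T T`, then `Q ~ T`. -/
theorem bisim_of_rwStar {A : Type} [Countable A]
    (T Q : CCS.Proc A) (hT : T.Wf) (hQ : Q.Wf)
    (h : CCS.RwStar T Q T) :
    CCS.Bisim Q T := by
  clear hT hQ
  induction h using Relation.ReflTransGen.head_induction_on with
  | refl => exact CCS.bisim_refl T
  | head hstep _ ih => exact CCS.rw_bisim hstep ih
end
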